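/- arXiv:1907.09935 — 5 statements merged into one kernel-verified Lean document; each statement's English description precedes it below -/
import Mathlib

section
/- Let T : ℕ → ℕ satisfy T 0 = 1, T 1 = 1, T 2 = 2, T 3 = 4, and T (n+4) = T (n+3) + T (n+2) + T (n+1) + T n for all n. Then for all n > 3, T (2*n) = (T n)^2 + (T (n-1))^2 + (T (n-2))^2 + 2 * T (n-1) * (T (n-2) + T (n-3)). -/
/-! The recurrence makes `T (m + n + 6)` a bilinear expression in four consecutive terms after
`m` and four after `n`, with coefficients read off from the initial values; putting `m = n`
gives the doubling formula. -/

section Tetranacci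

variable {R : Type*} [CommSemiring R] {T : ℕ → R}
  (hT0 : T 0 = 1) (hT1 : T 1 = 1) (hT2 : T 2 = 2) (hT3 : T 3 = 4)
  (hTrec : ∀ n, T (n + 4) = T (n + 3) + T (n + 2) + T (n + 1) + T n)
include hT0 hT1 hT2 hT3 hTrec

theorem tetranacci_add (n m : ℕ) :
    T (m + n + 6) = T (n + 3) * T (m + 3) + (T (n + 2) + T (n + 1) + T n) * T (m + 2)
      + (T (n + 2) + T (n + 1)) * T (m + 1) + T (n + 2) * T m := by
  induction n generalizing m with
  | zero =>
    rw [hT0, hT1, hT2, hT3, show m + 0 + 6 = m + 2 + 4 from rfl, hTrec, hTrec (m + 1), hTrec m]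
    ring
  | succ n ih =>
    rw [show m + (n + 1) + 6 = m + 1 + n + 6 by omega, ih (m + 1), hTrec m, hTrec n]
    ring

theorem tetranacci_two_mul_add_three (k : ℕ) :
    T (2 * (k + 3)) = T (k + 3) ^ 2 + T (k + 2) ^ 2 + T (k + 1) ^ 2
      + 2 * T (k + 2) * (T (k + 1) + T k) := by
  rw [show 2 * (k + 3) = k + k + 6 by omega, tetranacci_add hT0 hT1 hT2 hT3 hTrec]
  ring

end Tetranacci

theorem stmt2 (T : ℕ → ℕ) (hT0 : T 0 = 1) (hT1 : T 1 = 1) (hT2 : T 2 = 2) (hT3 : T 3 = 4)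
    (hTrec : ∀ n, T (n+4) = T (n+3) + T (n+2) + T (n+1) + T n) :
    ∀ n > 3, T (2*n) = (T n)^2 + (T (n-1))^2 + (T (n-2))^2
      + 2 * T (n-1) * (T (n-2) + T (n-3)) := by
  intro n hn
  obtain ⟨k, rfl⟩ : ∃ k, n = k + 3 := ⟨n - 3, by omega⟩
  exact tetranacci_two_mul_add_three hT0 hT1 hT2 hT3 hTrec k
end

section
/- Let T : ℕ → ℕ satisfy T 0 = 1, T 1 = 1, T 2 = 2, T 3 = 4, and T (n+4) = T (n+3) + T (n+2) + T (n+1) + T n for all n. Then for all n > 4, T n - 1 = T (n-2) + 2 * T (n-3) + 3 * (∑ i in Finset.range (n-3), T i), where the sum is T 0 + T 1 + ... + T (n-4). -/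
theorem stmt3 (T : ℕ → ℕ) (hT0 : T 0 = 1) (hT1 : T 1 = 1) (hT2 : T 2 = 2) (hT3 : T 3 = 4)
    (hTrec : ∀ n, T (n+4) = T (n+3) + T (n+2) + T (n+1) + T n) :
    ∀ n > 4, T n - 1 = T (n-2) + 2 * T (n-3) + 3 * (∑ i ∈ Finset.range (n-3), T i) := by
  have key : ∀ m, T (m+5) = T (m+3) + 2 * T (m+2) + 3 * (∑ i ∈ Finset.range (m+2), T i) + 1 := by
    intro m
    induction m with
    | zero =>
      have h4 : T 4 = T 3 + T 2 + T 1 + T 0 := hTrec 0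
      have h5 : T 5 = T 4 + T 3 + T 2 + T 1 := hTrec 1
      show T 5 = T 3 + 2 * T 2 + 3 * (∑ i ∈ Finset.range 2, T i) + 1
      rw [Finset.sum_range_succ, Finset.sum_range_one]
      omega
    | succ k ih =>
      have h1 : T (k+6) = T (k+5) + T (k+4) + T (k+3) + T (k+2) := hTrec (k+2)
      show T (k+6) = T (k+4) + 2 * T (k+3) + 3 * (∑ i ∈ Finset.range (k+3), T i) + 1
      rw [Finset.sum_range_succ]
      omega
  intro n hn
  obtain ⟨m, rfl⟩ : ∃ m, n = m + 5 := ⟨n - 5, by omega⟩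
  have h2 : m + 5 - 2 = m + 3 := by omega
  have h3 : m + 5 - 3 = m + 2 := by omega
  rw [h2, h3, key m]
  omega
end

section
/- Let T : ℕ → ℕ satisfy T 0 = 1, T 1 = 1, T 2 = 2, T 3 = 4, and T (n+4) = T (n+3) + T (n+2) + T (n+1) + T n for all n, and let f : ℕ → ℕ satisfy f 0 = 1, f 1 = 1, f (n+2) = f (n+1) + f n. Then for all n > 2, T (2*n) - f n = ∑_{i=1}^{n} T (2*n + 1 - 2*i) * f i. -/
theorem stmt4 (T f : ℕ → ℕ) (hT0 : T 0 = 1) (hT1 : T 1 = 1) (hT2 : T 2 = 2) (hT3 : T 3 = 4)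
    (hTrec : ∀ n, T (n+4) = T (n+3) + T (n+2) + T (n+1) + T n) (hf0 : f 0 = 1) (hf1 : f 1 = 1) (hfrec : ∀ n, f (n+2) = f (n+1) + f n) :
    ∀ n > 2, T (2*n) - f n = ∑ i ∈ Finset.Icc 1 n, T (2*n + 1 - 2*i) * f i := by
  have hf2 : f 2 = 2 := by rw [hfrec 0, hf0, hf1]
  have key : ∀ n, T (2*n) = f n + ∑ i ∈ Finset.range n, T (2*i+1) * f (n-i) := by
    have H : ∀ n, (T (2*n) = f n + ∑ i ∈ Finset.range n, T (2*i+1) * f (n-i)) ∧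
        (T (2*(n+1)) = f (n+1) + ∑ i ∈ Finset.range (n+1), T (2*i+1) * f (n+1-i)) := by
      intro n
      induction n with
      | zero =>
        constructor
        · simpa [hT0] using hf0.symm
        · simp [hT2, hfrec 0, hf0, hf1, hT1]
      | succ n ih =>
        refine ⟨ih.2, ?_⟩
        have hs2 : ∑ i ∈ Finset.range (n+2), T (2*i+1) * f (n+2-i)
            = (∑ i ∈ Finset.range n, T (2*i+1) * f (n-i+1))
              + (∑ i ∈ Finset.range n, T (2*i+1) * f (n-i))
              + T (2*n+1) * 2 + T (2*n+3) := by
          rw [Finset.sum_range_succ, Finset.sum_range_succ]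
          have h1 : ∀ i ∈ Finset.range n, T (2*i+1) * f (n+2-i)
              = T (2*i+1) * f (n-i+1) + T (2*i+1) * f (n-i) := by
            intro i hi
            have : i < n := Finset.mem_range.mp hi
            rw [show n+2-i = (n-i)+2 by omega, hfrec, show n-i+1 = n-i+1 from rfl, mul_add]
          rw [Finset.sum_congr rfl h1, Finset.sum_add_distrib]
          have e1 : n+2-n = 2 := by omega
          have e2 : n+2-(n+1) = 1 := by omega
          rw [e1, e2, hf2, hf1, show 2*(n+1)+1 = 2*n+3 by ring]
          ring
        have hs1 : ∑ i ∈ Finset.range (n+1), T (2*i+1) * f (n+1-i)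
            = (∑ i ∈ Finset.range n, T (2*i+1) * f (n-i+1)) + T (2*n+1) := by
          rw [Finset.sum_range_succ]
          have h1 : ∀ i ∈ Finset.range n, T (2*i+1) * f (n+1-i) = T (2*i+1) * f (n-i+1) := by
            intro i hi
            have : i < n := Finset.mem_range.mp hi
            rw [show n+1-i = n-i+1 by omega]
          rw [Finset.sum_congr rfl h1, show n+1-n = 1 by omega, hf1, mul_one]
        have hT : T (2*(n+2)) = T (2*n+3) + T (2*(n+1)) + T (2*n+1) + T (2*n) := by
          have := hTrec (2*n)
          rw [show 2*(n+2) = 2*n+4 by ring, show 2*(n+1) = 2*n+2 by ring]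
          linarith [hTrec (2*n)]
        have hfr := hfrec n
        have h1 := ih.1
        have h2 := ih.2
        rw [show n+1+1 = n+2 by rfl] at *
        rw [hT, hs2, hfr]
        rw [show 2*(n+1) = 2*n+2 by ring] at h2
        omega
    exact fun n => (H n).1
  intro n hn
  have hkey := key n
  have hre : ∑ i ∈ Finset.Icc 1 n, T (2*n + 1 - 2*i) * f i
      = ∑ i ∈ Finset.range n, T (2*i+1) * f (n-i) := by
    rw [show Finset.Icc 1 n = Finset.Ico 1 (n+1) by rw [Finset.Ico_add_one_right_eq_Icc]]
    rw [Finset.sum_Ico_eq_sum_range, show n + 1 - 1 = n by omega]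
    rw [← Finset.sum_range_reflect (fun i => T (2*i+1) * f (n-i)) n]
    apply Finset.sum_congr rfl
    intro i hi
    have : i < n := Finset.mem_range.mp hi
    rw [show 2*n+1-2*(1+i) = 2*(n-1-i)+1 by omega, show n-(n-1-i) = 1+i by omega]
  rw [hre]
  omega
end

section
/- Let T : ℕ → ℕ satisfy T 0 = 1, T 1 = 1, T 2 = 2, T 3 = 4, and T (n+4) = T (n+3) + T (n+2) + T (n+1) + T n, and let f : ℕ → ℕ satisfy f 0 = 1, f 1 = 1, f (n+2) = f (n+1) + f n. Then for all n > 4, T n - f n = ∑_{i=1}^{n-2} f i * T (n - i - 2). -/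
open Finset

lemma split4 (g : ℕ → ℕ) (k : ℕ) : ∑ i ∈ Icc 1 (k+4), g i =
    (∑ i ∈ Icc 1 k, g i) + g (k+1) + g (k+2) + g (k+3) + g (k+4) := by
  rw [show k+4 = (k+3)+1 from rfl, Finset.sum_Icc_succ_top (by omega),
      show k+3 = (k+2)+1 from rfl, Finset.sum_Icc_succ_top (by omega),
      show k+2 = (k+1)+1 from rfl, Finset.sum_Icc_succ_top (by omega),
      Finset.sum_Icc_succ_top (by omega)]

lemma split3 (g : ℕ → ℕ) (k : ℕ) : ∑ i ∈ Icc 1 (k+3), g i =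
    (∑ i ∈ Icc 1 k, g i) + g (k+1) + g (k+2) + g (k+3) := by
  rw [show k+3 = (k+2)+1 from rfl, Finset.sum_Icc_succ_top (by omega),
      show k+2 = (k+1)+1 from rfl, Finset.sum_Icc_succ_top (by omega),
      Finset.sum_Icc_succ_top (by omega)]

lemma split2 (g : ℕ → ℕ) (k : ℕ) : ∑ i ∈ Icc 1 (k+2), g i =
    (∑ i ∈ Icc 1 k, g i) + g (k+1) + g (k+2) := by
  rw [show k+2 = (k+1)+1 from rfl, Finset.sum_Icc_succ_top (by omega),
      Finset.sum_Icc_succ_top (by omega)]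

lemma split1 (g : ℕ → ℕ) (k : ℕ) : ∑ i ∈ Icc 1 (k+1), g i =
    (∑ i ∈ Icc 1 k, g i) + g (k+1) := by
  rw [Finset.sum_Icc_succ_top (by omega)]

lemma conv (T f : ℕ → ℕ) (hT0 : T 0 = 1) (hT1 : T 1 = 1) (hT2 : T 2 = 2) (hT3 : T 3 = 4)
    (hTrec : ∀ n, T (n+4) = T (n+3) + T (n+2) + T (n+1) + T n)
    (hfrec : ∀ n, f (n+2) = f (n+1) + f n) (k : ℕ) :
    ∑ i ∈ Icc 1 (k+4), f i * T (k+4-i) =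
      (∑ i ∈ Icc 1 (k+3), f i * T (k+3-i)) + (∑ i ∈ Icc 1 (k+2), f i * T (k+2-i)) +
      (∑ i ∈ Icc 1 (k+1), f i * T (k+1-i)) + (∑ i ∈ Icc 1 k, f i * T (k-i)) + f (k+4) := by
  rw [split4 (fun i => f i * T (k+4-i)) k, split3 (fun i => f i * T (k+3-i)) k,
      split2 (fun i => f i * T (k+2-i)) k, split1 (fun i => f i * T (k+1-i)) k]

  rw [show k+4-(k+1) = 3 by omega, show k+4-(k+2) = 2 by omega, show k+4-(k+3) = 1 by omega,
      show k+4-(k+4) = 0 by omega, show k+3-(k+1) = 2 by omega, show k+3-(k+2) = 1 by omega,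
      show k+3-(k+3) = 0 by omega, show k+2-(k+1) = 1 by omega, show k+2-(k+2) = 0 by omega,
      show k+1-(k+1) = 0 by omega, hT0, hT1, hT2, hT3]
  have hsum : ∑ i ∈ Icc 1 k, f i * T (k+4-i) =
      (∑ i ∈ Icc 1 k, f i * T (k+3-i)) + (∑ i ∈ Icc 1 k, f i * T (k+2-i)) +
      (∑ i ∈ Icc 1 k, f i * T (k+1-i)) + (∑ i ∈ Icc 1 k, f i * T (k-i)) := by
    rw [← Finset.sum_add_distrib, ← Finset.sum_add_distrib, ← Finset.sum_add_distrib]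
    apply Finset.sum_congr rfl
    intro i hi
    simp only [Finset.mem_Icc] at hi
    rw [show k+4-i = (k-i)+4 by omega, hTrec (k-i),
        show (k-i)+3 = k+3-i by omega, show (k-i)+2 = k+2-i by omega,
        show (k-i)+1 = k+1-i by omega]
    ring
  have e1 := hfrec (k+1)
  have e2 := hfrec (k+2)
  omega

lemma key (T f : ℕ → ℕ) (hT0 : T 0 = 1) (hT1 : T 1 = 1) (hT2 : T 2 = 2) (hT3 : T 3 = 4)
    (hTrec : ∀ n, T (n+4) = T (n+3) + T (n+2) + T (n+1) + T n) (hf0 : f 0 = 1) (hf1 : f 1 = 1)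
    (hfrec : ∀ n, f (n+2) = f (n+1) + f n) :
    ∀ m, T (m+5) = f (m+5) + ∑ i ∈ Icc 1 (m+3), f i * T (m+3-i) := by
  intro m
  induction m using Nat.strong_induction_on with
  | _ m ih =>
    match m with
    | 0 =>
      rw [show (0:ℕ)+3 = 0+3 from rfl, split3 (fun i => f i * T (0+3-i)) 0]
      simp only [Finset.Icc_eq_empty (by omega : ¬ (1:ℕ) ≤ 0), Finset.sum_empty]
      have g2 : f 2 = 2 := by have h : f 2 = f 1 + f 0 := hfrec 0; omega
      have g3 : f 3 = 3 := by have h : f 3 = f 2 + f 1 := hfrec 1; omega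
      have g4 : f 4 = 5 := by have h : f 4 = f 3 + f 2 := hfrec 2; omega
      have g5 : f 5 = 8 := by have h : f 5 = f 4 + f 3 := hfrec 3; omega
      have g6 : f 6 = 13 := by have h : f 6 = f 5 + f 4 := hfrec 4; omega
      have g7 : f 7 = 21 := by have h : f 7 = f 6 + f 5 := hfrec 5; omega
      have g8 : f 8 = 34 := by have h : f 8 = f 7 + f 6 := hfrec 6; omega
      have w4 : T 4 = 8 := by have h : T 4 = T 3 + T 2 + T 1 + T 0 := hTrec 0; omega
      have w5 : T 5 = 15 := by have h : T 5 = T 4 + T 3 + T 2 + T 1 := hTrec 1; omega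
      have w6 : T 6 = 29 := by have h : T 6 = T 5 + T 4 + T 3 + T 2 := hTrec 2; omega
      have w7 : T 7 = 56 := by have h : T 7 = T 6 + T 5 + T 4 + T 3 := hTrec 3; omega
      have w8 : T 8 = 108 := by have h : T 8 = T 7 + T 6 + T 5 + T 4 := hTrec 4; omega
      norm_num [hT0, hT1, hT2, hT3, hf0, hf1, g2, g3, g4, g5, g6, g7, g8, w4, w5, w6, w7, w8]
    | 1 =>
      rw [show (1:ℕ)+3 = 1+3 from rfl, split4 (fun i => f i * T (1+3-i)) 0]
      simp only [Finset.Icc_eq_empty (by omega : ¬ (1:ℕ) ≤ 0), Finset.sum_empty]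
      have g2 : f 2 = 2 := by have h : f 2 = f 1 + f 0 := hfrec 0; omega
      have g3 : f 3 = 3 := by have h : f 3 = f 2 + f 1 := hfrec 1; omega
      have g4 : f 4 = 5 := by have h : f 4 = f 3 + f 2 := hfrec 2; omega
      have g5 : f 5 = 8 := by have h : f 5 = f 4 + f 3 := hfrec 3; omega
      have g6 : f 6 = 13 := by have h : f 6 = f 5 + f 4 := hfrec 4; omega
      have g7 : f 7 = 21 := by have h : f 7 = f 6 + f 5 := hfrec 5; omega
      have g8 : f 8 = 34 := by have h : f 8 = f 7 + f 6 := hfrec 6; omega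
      have w4 : T 4 = 8 := by have h : T 4 = T 3 + T 2 + T 1 + T 0 := hTrec 0; omega
      have w5 : T 5 = 15 := by have h : T 5 = T 4 + T 3 + T 2 + T 1 := hTrec 1; omega
      have w6 : T 6 = 29 := by have h : T 6 = T 5 + T 4 + T 3 + T 2 := hTrec 2; omega
      have w7 : T 7 = 56 := by have h : T 7 = T 6 + T 5 + T 4 + T 3 := hTrec 3; omega
      have w8 : T 8 = 108 := by have h : T 8 = T 7 + T 6 + T 5 + T 4 := hTrec 4; omega
      norm_num [hT0, hT1, hT2, hT3, hf0, hf1, g2, g3, g4, g5, g6, g7, g8, w4, w5, w6, w7, w8]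
    | 2 =>
      rw [show (2:ℕ)+3 = 1+4 from rfl, split4 (fun i => f i * T (1+4-i)) 1,
          split1 (fun i => f i * T (1+4-i)) 0]
      simp only [Finset.Icc_eq_empty (by omega : ¬ (1:ℕ) ≤ 0), Finset.sum_empty]
      have g2 : f 2 = 2 := by have h : f 2 = f 1 + f 0 := hfrec 0; omega
      have g3 : f 3 = 3 := by have h : f 3 = f 2 + f 1 := hfrec 1; omega
      have g4 : f 4 = 5 := by have h : f 4 = f 3 + f 2 := hfrec 2; omega
      have g5 : f 5 = 8 := by have h : f 5 = f 4 + f 3 := hfrec 3; omega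
      have g6 : f 6 = 13 := by have h : f 6 = f 5 + f 4 := hfrec 4; omega
      have g7 : f 7 = 21 := by have h : f 7 = f 6 + f 5 := hfrec 5; omega
      have g8 : f 8 = 34 := by have h : f 8 = f 7 + f 6 := hfrec 6; omega
      have w4 : T 4 = 8 := by have h : T 4 = T 3 + T 2 + T 1 + T 0 := hTrec 0; omega
      have w5 : T 5 = 15 := by have h : T 5 = T 4 + T 3 + T 2 + T 1 := hTrec 1; omega
      have w6 : T 6 = 29 := by have h : T 6 = T 5 + T 4 + T 3 + T 2 := hTrec 2; omega
      have w7 : T 7 = 56 := by have h : T 7 = T 6 + T 5 + T 4 + T 3 := hTrec 3; omega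
      have w8 : T 8 = 108 := by have h : T 8 = T 7 + T 6 + T 5 + T 4 := hTrec 4; omega
      norm_num [hT0, hT1, hT2, hT3, hf0, hf1, g2, g3, g4, g5, g6, g7, g8, w4, w5, w6, w7, w8]
    | 3 =>
      rw [show (3:ℕ)+3 = 2+4 from rfl, split4 (fun i => f i * T (2+4-i)) 2,
          split2 (fun i => f i * T (2+4-i)) 0]
      simp only [Finset.Icc_eq_empty (by omega : ¬ (1:ℕ) ≤ 0), Finset.sum_empty]
      have g2 : f 2 = 2 := by have h : f 2 = f 1 + f 0 := hfrec 0; omega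
      have g3 : f 3 = 3 := by have h : f 3 = f 2 + f 1 := hfrec 1; omega
      have g4 : f 4 = 5 := by have h : f 4 = f 3 + f 2 := hfrec 2; omega
      have g5 : f 5 = 8 := by have h : f 5 = f 4 + f 3 := hfrec 3; omega
      have g6 : f 6 = 13 := by have h : f 6 = f 5 + f 4 := hfrec 4; omega
      have g7 : f 7 = 21 := by have h : f 7 = f 6 + f 5 := hfrec 5; omega
      have g8 : f 8 = 34 := by have h : f 8 = f 7 + f 6 := hfrec 6; omega
      have w4 : T 4 = 8 := by have h : T 4 = T 3 + T 2 + T 1 + T 0 := hTrec 0; omega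
      have w5 : T 5 = 15 := by have h : T 5 = T 4 + T 3 + T 2 + T 1 := hTrec 1; omega
      have w6 : T 6 = 29 := by have h : T 6 = T 5 + T 4 + T 3 + T 2 := hTrec 2; omega
      have w7 : T 7 = 56 := by have h : T 7 = T 6 + T 5 + T 4 + T 3 := hTrec 3; omega
      have w8 : T 8 = 108 := by have h : T 8 = T 7 + T 6 + T 5 + T 4 := hTrec 4; omega
      norm_num [hT0, hT1, hT2, hT3, hf0, hf1, g2, g3, g4, g5, g6, g7, g8, w4, w5, w6, w7, w8]
    | (n+4) =>
      have h0 : T (n+5) = f (n+5) + ∑ i ∈ Icc 1 (n+3), f i * T (n+3-i) := ih n (by omega)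
      have h1 : T (n+6) = f (n+6) + ∑ i ∈ Icc 1 (n+4), f i * T (n+4-i) := ih (n+1) (by omega)
      have h2 : T (n+7) = f (n+7) + ∑ i ∈ Icc 1 (n+5), f i * T (n+5-i) := ih (n+2) (by omega)
      have h3 : T (n+8) = f (n+8) + ∑ i ∈ Icc 1 (n+6), f i * T (n+6-i) := ih (n+3) (by omega)
      have hc : ∑ i ∈ Icc 1 (n+7), f i * T (n+7-i) =
          (∑ i ∈ Icc 1 (n+6), f i * T (n+6-i)) + (∑ i ∈ Icc 1 (n+5), f i * T (n+5-i)) +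
          (∑ i ∈ Icc 1 (n+4), f i * T (n+4-i)) + (∑ i ∈ Icc 1 (n+3), f i * T (n+3-i)) +
          f (n+7) := conv T f hT0 hT1 hT2 hT3 hTrec hfrec (n+3)
      show T (n+9) = f (n+9) + ∑ i ∈ Icc 1 (n+7), f i * T (n+7-i)
      have hT : T (n+9) = T (n+8) + T (n+7) + T (n+6) + T (n+5) := hTrec (n+5)
      have ef1 : f (n+9) = f (n+8) + f (n+7) := hfrec (n+7)
      have ef2 : f (n+8) = f (n+7) + f (n+6) := hfrec (n+6)
      have ef3 : f (n+7) = f (n+6) + f (n+5) := hfrec (n+5)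
      omega

theorem stmt5 (T f : ℕ → ℕ) (hT0 : T 0 = 1) (hT1 : T 1 = 1) (hT2 : T 2 = 2) (hT3 : T 3 = 4)
    (hTrec : ∀ n, T (n+4) = T (n+3) + T (n+2) + T (n+1) + T n) (hf0 : f 0 = 1) (hf1 : f 1 = 1) (hfrec : ∀ n, f (n+2) = f (n+1) + f n) :
    ∀ n > 4, T n - f n = ∑ i ∈ Finset.Icc 1 (n-2), f i * T (n - i - 2) := by
  intro n hn
  obtain ⟨m, rfl⟩ : ∃ m, n = m + 5 := ⟨n - 5, by omega⟩
  have hk := key T f hT0 hT1 hT2 hT3 hTrec hf0 hf1 hfrec m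
  have hs : ∑ i ∈ Finset.Icc 1 (m+5-2), f i * T (m+5-i-2) = ∑ i ∈ Icc 1 (m+3), f i * T (m+3-i) := by
    rw [show m+5-2 = m+3 by omega]
    apply Finset.sum_congr rfl
    intro i hi
    simp only [Finset.mem_Icc] at hi
    rw [show m+5-i-2 = m+3-i by omega]
  omega
end

section
/- Let T : ℕ → ℕ satisfy T 0 = 1, T 1 = 1, T 2 = 2, T 3 = 4, and T (n+4) = T (n+3) + T (n+2) + T (n+1) + T n, and let f : ℕ → ℕ satisfy f 0 = 1, f 1 = 1, f (n+2) = f (n+1) + f n. Then for all n > 2, T (2*n) - (f n)^2 = (∑_{i=1}^{n} (f (i-1))^2 * T (2*n - 2*i)) + (∑_{i=2}^{n} f (i-2) * f (i-1) * T (2*n - 2*i + 1)). -/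
theorem stmt6 (T f : ℕ → ℕ) (hT0 : T 0 = 1) (hT1 : T 1 = 1) (hT2 : T 2 = 2) (hT3 : T 3 = 4)
    (hTrec : ∀ n, T (n+4) = T (n+3) + T (n+2) + T (n+1) + T n) (hf0 : f 0 = 1) (hf1 : f 1 = 1) (hfrec : ∀ n, f (n+2) = f (n+1) + f n) :
    ∀ n > 2, T (2*n) - (f n)^2 =
      (∑ i ∈ Finset.Icc 1 n, (f (i-1))^2 * T (2*n - 2*i))
      + (∑ i ∈ Finset.Icc 2 n, f (i-2) * f (i-1) * T (2*n - 2*i + 1)) := by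
  intro n hn
  have hn1 : 1 ≤ n := by omega
  have key : ∀ k, 1 ≤ k → k ≤ n →
      (T (2*n) : ℤ) =
        (∑ i ∈ Finset.Icc 1 k, ((f (i-1) : ℤ))^2 * (T (2*n - 2*i) : ℤ))
        + (∑ i ∈ Finset.Icc 2 k, (f (i-2) : ℤ) * (f (i-1) : ℤ) * (T (2*n - 2*i + 1) : ℤ))
        + (((f k : ℤ))^2 * (T (2*n-2*k) : ℤ)
           + 2*((f (k-1) : ℤ))^2 * (T (2*n-2*k+2) : ℤ)
           + (f (k-1) : ℤ) * (f k : ℤ) * (T (2*n-2*k+3) : ℤ)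
           - (2*(f (k-1) : ℤ)*(f k : ℤ) * (T (2*n-2*k) : ℤ)
              + ((f (k-1) : ℤ))^2 * (T (2*n-2*k+3) : ℤ)
              + (f (k-1) : ℤ)*(f k : ℤ)*(T (2*n-2*k+2) : ℤ))) := by
    intro k hk
    induction k, hk using Nat.le_induction with
    | base =>
      intro _
      have e2 : 2*n - 2*1 + 2 = 2*n := by omega
      have e3 : 2*n - 2*1 + 3 = 2*n + 1 := by omega
      rw [e2, e3]
      have hIcc : Finset.Icc 2 1 = (∅ : Finset ℕ) := by decide
      simp [hIcc, hf0, hf1]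
      ring
    | succ k hk ih =>
      intro hkn
      have IH := ih (by omega)
      have e1 : 2*n - 2*k + 3 = 2*n-2*(k+1) + 5 := by omega
      have e2 : 2*n - 2*k + 2 = 2*n-2*(k+1) + 4 := by omega
      have e3 : 2*n - 2*k = 2*n-2*(k+1) + 2 := by omega
      rw [e1, e2, e3] at IH
      set m := 2*n - 2*(k+1) with hm
      have hT4 : (T (m+4) : ℤ) = T (m+3) + T (m+2) + T (m+1) + T m := by
        exact_mod_cast hTrec m
      have hT5 : (T (m+5) : ℤ) = T (m+4) + T (m+3) + T (m+2) + T (m+1) := by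
        have h := hTrec (m+1)
        rw [show m+1+4 = m+5 from by omega, show m+1+3 = m+4 from by omega,
            show m+1+2 = m+3 from by omega, show m+1+1 = m+2 from by omega] at h
        exact_mod_cast h
      have hw : (f (k+1) : ℤ) = f k + f (k-1) := by
        have h := hfrec (k-1)
        rw [show k-1+2 = k+1 from by omega, show k-1+1 = k from by omega] at h
        exact_mod_cast h
      rw [Finset.sum_Icc_succ_top (by omega : 1 ≤ k+1),
          Finset.sum_Icc_succ_top (by omega : 2 ≤ k+1)]
      rw [show k+1-1 = k from by omega, show k+1-2 = k-1 from by omega]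
      rw [hT5, hT4] at IH
      rw [hw]
      linear_combination IH
  have hkey := key n hn1 le_rfl
  rw [show 2*n - 2*n = 0 from by omega] at hkey
  norm_num [hT0, hT2, hT3] at hkey
  have hNat : T (2*n) = (∑ i ∈ Finset.Icc 1 n, (f (i-1))^2 * T (2*n - 2*i))
      + (∑ i ∈ Finset.Icc 2 n, f (i-2) * f (i-1) * T (2*n - 2*i + 1)) + (f n)^2 := by
    zify
    push_cast
    linear_combination hkey
  rw [hNat, Nat.add_sub_cancel]
end
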